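/- arXiv:math-ph/0411047 — 2 statements merged into one kernel-verified Lean document; each statement's English description precedes it below -/
import Mathlib

section
/- λ = 4 is the smallest value of λ > 0 for which Λ(λ) := {(p,q) ∈ (ℕ*)² : λ⁴ = 4(p−q)² + 16λ²pq} is nonempty, and Λ(4) = {(1,1)}, so N(4) = Σ_{(p,q)∈Λ(4)}(p+q) = 2. -/
open scoped BigOperators

/-- The set `Λ(λ)` of pairs of positive integers `(p,q)` with
`λ⁴ = 4(p−q)² + 16λ²pq` (squared form of Hitchin's condition). -/
def LambdaSet (lam : ℝ) : Set (ℕ × ℕ) :=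
  {pq | 1 ≤ pq.1 ∧ 1 ≤ pq.2 ∧
    lam ^ 4 = 4 * ((pq.1 : ℝ) - pq.2) ^ 2 + 16 * lam ^ 2 * pq.1 * pq.2}

/-- `N(λ) = Σ_{(p,q)∈Λ(λ)} (p+q)`. -/
noncomputable def Nfun (lam : ℝ) : ℕ :=
  ∑ᶠ pq ∈ LambdaSet lam, (pq.1 + pq.2)

lemma lambdaSet_four : LambdaSet 4 = {(1, 1)} := by
  ext ⟨p, q⟩
  simp only [LambdaSet, Set.mem_setOf_eq, Set.mem_singleton_iff, Prod.mk.injEq]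
  constructor
  · rintro ⟨hp, hq, heq⟩
    have hp' : (1 : ℝ) ≤ (p : ℝ) := by exact_mod_cast hp
    have hq' : (1 : ℝ) ≤ (q : ℝ) := by exact_mod_cast hq
    have hp1 : (p : ℝ) = 1 := by nlinarith [sq_nonneg ((p : ℝ) - q)]
    have hq1 : (q : ℝ) = 1 := by nlinarith [sq_nonneg ((p : ℝ) - q)]
    constructor <;> [exact_mod_cast hp1; exact_mod_cast hq1]
  · rintro ⟨rfl, rfl⟩
    norm_num

/-- `λ = 4` is the smallest `λ > 0` with `Λ(λ)` nonempty, `Λ(4) = {(1,1)}`,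
and consequently `N(4) = 2`. -/
theorem lambda_four_is_first_harmonic_spinor :
    (∀ lam : ℝ, 0 < lam → (LambdaSet lam).Nonempty → 4 ≤ lam) ∧
    LambdaSet 4 = {(1, 1)} ∧
    Nfun 4 = 2 := by
  refine ⟨?_, lambdaSet_four, ?_⟩
  · rintro lam hlam ⟨⟨p, q⟩, hp, hq, heq⟩
    have hp' : (1 : ℝ) ≤ (p : ℝ) := by exact_mod_cast hp
    have hq' : (1 : ℝ) ≤ (q : ℝ) := by exact_mod_cast hq
    simp only at heq hp' hq'
    have hpq : (1 : ℝ) ≤ (p : ℝ) * q := le_trans hp' (le_mul_of_one_le_right (by linarith) hq')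
    have hl2 : (0 : ℝ) < lam ^ 2 := by positivity
    have h2 : 16 ≤ lam ^ 2 := by
      nlinarith [sq_nonneg ((p : ℝ) - q), mul_le_mul_of_nonneg_left hpq (le_of_lt hl2)]
    nlinarith
  · rw [Nfun, lambdaSet_four, finsum_mem_singleton]
    rfl
end

section
/- The set of λ ∈ (0,∞) for which Λ(λ) = {(p,q)∈(ℕ*)² : λ⁴ = 4(p−q)² + 16λ²pq} is nonempty is discrete (has no accumulation point in (0,∞)). -/
/-- The unique positive root `λ` of `λ⁴ = 4(p−q)² + 16λ²pq`. -/
noncomputable def froot (p q : ℕ) : ℝ :=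
  Real.sqrt (8*p*q + Real.sqrt (64*((p:ℝ)*q)^2 + 4*((p:ℝ) - q)^2))

lemma froot_eq (p q : ℕ) (lam : ℝ) (hl : 0 < lam)
    (h : lam ^ 4 = 4 * ((p : ℝ) - q) ^ 2 + 16 * lam ^ 2 * p * q) :
    lam = froot p q := by
  set s := Real.sqrt (64*((p:ℝ)*q)^2 + 4*((p:ℝ) - q)^2) with hs
  have hsnn : 0 ≤ 64*((p:ℝ)*q)^2 + 4*((p:ℝ) - q)^2 := by positivity
  have hs2 : s^2 = 64*((p:ℝ)*q)^2 + 4*((p:ℝ) - q)^2 := Real.sq_sqrt hsnn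
  have hge : 8*(p:ℝ)*q ≤ s := by
    rw [hs]
    have h1 : (8*(p:ℝ)*q)^2 ≤ 64*((p:ℝ)*q)^2 + 4*((p:ℝ)-q)^2 := by
      nlinarith [sq_nonneg ((p:ℝ)-q)]
    calc 8*(p:ℝ)*q = Real.sqrt ((8*(p:ℝ)*q)^2) := by
          rw [Real.sqrt_sq (by positivity)]
      _ ≤ _ := Real.sqrt_le_sqrt h1
  have key : (lam^2 - 8*p*q - s) * (lam^2 - 8*p*q + s) = 0 := by nlinarith [hs2]
  have hl2 : 0 < lam^2 := by positivity
  rcases mul_eq_zero.mp key with hc | hc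
  · have hlam2 : lam^2 = 8*p*q + s := by linarith
    have : lam = Real.sqrt (lam^2) := (Real.sqrt_sq hl.le).symm
    rw [this, hlam2, froot]
  · exfalso; linarith

/-- The set of `λ ∈ (0,∞)` for which
`Λ(λ) = {(p,q) ∈ (ℕ*)² : λ⁴ = 4(p−q)² + 16λ²pq}` is nonempty is discrete: it has no
accumulation point in `(0,∞)` (around each point of `(0,∞)` there is a punctured
neighborhood missing the set). -/
theorem harmonicSpinor_lambdas_discrete :
    ∀ x : ℝ, 0 < x → ∃ ε > (0 : ℝ),
      ∀ lam : ℝ, 0 < lam →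
        (∃ p q : ℕ, 1 ≤ p ∧ 1 ≤ q ∧
          lam ^ 4 = 4 * ((p : ℝ) - q) ^ 2 + 16 * lam ^ 2 * p * q) →
        |lam - x| < ε → lam = x := by
  intro x hx
  set N : ℕ := ⌈(x+1)^2⌉₊ with hN
  set T : Finset ℝ :=
    ((Finset.Icc 1 N) ×ˢ (Finset.Icc 1 N)).image (fun pq => froot pq.1 pq.2) with hT
  -- key: any lam in the set with lam < x+1 lies in T
  have hmem : ∀ lam : ℝ, 0 < lam → lam < x + 1 →
      (∃ p q : ℕ, 1 ≤ p ∧ 1 ≤ q ∧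
        lam ^ 4 = 4 * ((p : ℝ) - q) ^ 2 + 16 * lam ^ 2 * p * q) → lam ∈ T := by
    intro lam hl hlt ⟨p, q, hp, hq, heq⟩
    have hpq : (p:ℝ) * q ≤ lam^2 / 16 := by nlinarith [sq_nonneg ((p:ℝ) - q), mul_pos hl hl, sq_nonneg (lam*lam)]
    have hlx : lam^2 < (x+1)^2 := by nlinarith
    have hpb : (p:ℝ) ≤ (x+1)^2 := by
      have hq1 : (1:ℝ) ≤ (q:ℝ) := by exact_mod_cast hq
      have hp0 : (0:ℝ) ≤ (p:ℝ) := Nat.cast_nonneg p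
      nlinarith
    have hqb : (q:ℝ) ≤ (x+1)^2 := by
      have hp1 : (1:ℝ) ≤ (p:ℝ) := by exact_mod_cast hp
      have hq0 : (0:ℝ) ≤ (q:ℝ) := Nat.cast_nonneg q
      nlinarith
    have hpN : p ≤ N := by
      have : (p:ℝ) ≤ (N:ℝ) := hpb.trans (Nat.le_ceil _)
      exact_mod_cast this
    have hqN : q ≤ N := by
      have : (q:ℝ) ≤ (N:ℝ) := hqb.trans (Nat.le_ceil _)
      exact_mod_cast this
    rw [hT]
    apply Finset.mem_image.mpr
    exact ⟨(p, q), Finset.mem_product.mpr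
      ⟨Finset.mem_Icc.mpr ⟨hp, hpN⟩, Finset.mem_Icc.mpr ⟨hq, hqN⟩⟩,
      (froot_eq p q lam hl heq).symm⟩
  by_cases hT' : (T.erase x).Nonempty
  · refine ⟨min 1 ((T.erase x).inf' hT' (fun y => |y - x|)), ?_, ?_⟩
    · apply lt_min one_pos
      rw [Finset.lt_inf'_iff]
      intro y hy
      exact abs_pos.mpr (sub_ne_zero.mpr (Finset.ne_of_mem_erase hy))
    · intro lam hl hex hdist
      have h1 : |lam - x| < 1 := hdist.trans_le (min_le_left _ _)
      have hlt : lam < x + 1 := by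
        rcases abs_lt.mp h1 with ⟨_, h⟩; linarith
      have hmemT : lam ∈ T := hmem lam hl hlt hex
      by_contra hne
      have : lam ∈ T.erase x := Finset.mem_erase.mpr ⟨hne, hmemT⟩
      have := Finset.inf'_le (fun y => |y - x|) this
      have := hdist.trans_le (min_le_right _ _)
      linarith
  · refine ⟨1, one_pos, ?_⟩
    intro lam hl hex hdist
    have hlt : lam < x + 1 := by
      rcases abs_lt.mp hdist with ⟨_, h⟩; linarith
    have hmemT : lam ∈ T := hmem lam hl hlt hex
    by_contra hne
    exact hT' ⟨lam, Finset.mem_erase.mpr ⟨hne, hmemT⟩⟩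
end
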